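/- The quantity ∇_θ H̃_θ(A) + ∑_{i=1}^d H_θ^{(i)}(A_{<i}) ∇_θ ∑_{j=1}^{i-1} log p_θ(A_j | A_{<j}), with A sampled from p_θ, is an unbiased estimator of the gradient of the entropy: its expectation under p_θ equals ∇_θ H_θ. -/

import Mathlib

/-
Write `p(a) = ∏ᵢ qᵢ(aᵢ | a_{<i})` and let `sⱼ = ∇ log qⱼ(aⱼ | a_{<j})` be the scores, so that
`∇p = p · ∑ⱼ sⱼ` and, since `∑ₐ ∇p(a) = 0`, `∇H = -E[log p · ∑ⱼ sⱼ] = -∑_{i,j} E[log qᵢ · sⱼ]`.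
Everything rests on the tower property of the chain rule,
`E[h(A_{<i}, Aᵢ)] = E[∑_b qᵢ(b | A_{<i}) h(A_{<i}, b)]`, proved by summing out the coordinates
from the last one down, each conditional summing to one. Because `∑_b ∇qᵢ(b | ·) = 0`, a score has
conditional mean zero, which kills the terms `j > i`; for `j < i` the tower property at `i` turns
`E[log qᵢ · sⱼ]` into `-E[H⁽ⁱ⁾ sⱼ]`, and for `j = i` it turns `E[log qᵢ · sᵢ]` into `-E[∇H⁽ⁱ⁾]`.
-/

open Finset

variable {m d : ℕ} {A : Fin d → Type*} [∀ i, Fintype (A i)]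

/-- Conditional entropy of coordinate `i` given the prefix encoded by `a`:
`H_θ^{(i)}(a_{<i}) = -∑_b q θ i a b · log (q θ i a b)`. -/
noncomputable def condEnt (q : (Fin m → ℝ) → (i : Fin d) → ((j : Fin d) → A j) → A i → ℝ)
    (θ : Fin m → ℝ) (i : Fin d) (a : (j : Fin d) → A j) : ℝ :=
  -∑ b : A i, q θ i a b * Real.log (q θ i a b)

open Function Real

theorem Fintype.sum_sum_update_eq_card_nsmul {ι : Type*} [Fintype ι] [DecidableEq ι]
    {β : ι → Type*} [∀ i, Fintype (β i)] {M : Type*} [AddCommMonoid M] (i : ι)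
    (w : (∀ j, β j) → β i → M) (hw : ∀ a c b, w (update a i c) b = w a b) :
    ∑ a, ∑ b, w a b = Fintype.card (β i) • ∑ a, w a (a i) := by
  let φ : (∀ j, β j) × β i → (∀ j, β j) × β i := fun p => (update p.1 i p.2, p.1 i)
  have hφ : Involutive φ := by
    rintro ⟨a, b⟩
    simp [φ]
  calc ∑ a, ∑ b, w a b = ∑ p : (∀ j, β j) × β i, w (φ p).1 (φ p).2 := by
        rw [← Fintype.sum_prod_type']
        exact (Fintype.sum_bijective φ hφ.bijective _ _ fun _ => rfl).symm
    _ = ∑ a, ∑ _b : β i, w a (a i) := by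
        rw [Fintype.sum_prod_type]
        simp only [φ, hw]
    _ = Fintype.card (β i) • ∑ a, w a (a i) := by
        simp [smul_sum]

theorem DependsOn.apply_update_of_notMem {ι : Type*} [DecidableEq ι] {α : ι → Type*} {β : Type*}
    {f : (∀ i, α i) → β} {s : Set ι} (hf : DependsOn f s) {i : ι} (hi : i ∉ s) (x : ∀ i, α i)
    (y : α i) : f (Function.update x i y) = f x :=
  hf fun _ hj => update_of_ne (ne_of_mem_of_not_mem hj hi) _ _

section Calculus

variable {𝕜 F ι : Type*} [NontriviallyNormedField 𝕜] [NormedAddCommGroup F] [NormedSpace 𝕜 F]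
  [Fintype ι] {x : F}

theorem sum_fderiv_eq_zero_of_sum_eq_const {f : ι → F → 𝕜} (hf : ∀ i, DifferentiableAt 𝕜 (f i) x)
    {c : 𝕜} (hc : ∀ y, ∑ i, f i y = c) : ∑ i, fderiv 𝕜 (f i) x = 0 := by
  rw [← fderiv_fun_sum fun i _ => hf i, funext hc, fderiv_const_apply]

theorem fderiv_prod_eq_smul_sum_inv_smul {g : ι → F → 𝕜} (hg : ∀ i, DifferentiableAt 𝕜 (g i) x)
    (hg0 : ∀ i, g i x ≠ 0) :
    fderiv 𝕜 (fun y => ∏ i, g i y) x = (∏ i, g i x) • ∑ i, (g i x)⁻¹ • fderiv 𝕜 (g i) x := by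
  classical
  rw [(HasFDerivAt.finsetProd fun i _ => (hg i).hasFDerivAt).fderiv, smul_sum]
  refine sum_congr rfl fun i _ => ?_
  rw [smul_smul, ← div_eq_mul_inv]
  congr 1
  rw [eq_div_iff (hg0 i), prod_erase_mul _ _ (mem_univ i)]

theorem hasFDerivAt_sum_negMulLog {E : Type*} [NormedAddCommGroup E] [NormedSpace ℝ E] {x : E}
    {f : ι → E → ℝ} (hf : ∀ i, DifferentiableAt ℝ (f i) x) (hf0 : ∀ i, f i x ≠ 0)
    (hsum : ∀ y, ∑ i, f i y = 1) :
    HasFDerivAt (fun y => ∑ i, negMulLog (f i y)) (-∑ i, log (f i x) • fderiv ℝ (f i) x) x := by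
  refine (HasFDerivAt.fun_sum fun i (_ : i ∈ univ) =>
    (hasDerivAt_negMulLog (hf0 i)).comp_hasFDerivAt x (hf i).hasFDerivAt).congr_fderiv ?_
  simp only [sub_smul, neg_smul, one_smul, sum_sub_distrib, sum_neg_distrib,
    sum_fderiv_eq_zero_of_sum_eq_const hf hsum, sub_zero]

end Calculus

structure IsAutoregressive (q : (i : Fin d) → (∀ j, A j) → A i → ℝ) : Prop where
  dependsOn : ∀ i, DependsOn (q i) (Set.Iio i)
  sum_eq_one : ∀ i a, ∑ b, q i a b = 1

def chainProb (q : (i : Fin d) → (∀ j, A j) → A i → ℝ) (a : ∀ j, A j) : ℝ :=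
  ∏ k, q k a (a k)

/-- `D` plays the role of `∇_θ q` at a fixed parameter, so that
`score q D j a = ∇_θ log qⱼ(aⱼ | a_{<j})`. -/
noncomputable def score {E : Type*} [AddCommGroup E] [Module ℝ E]
    (q : (i : Fin d) → (∀ j, A j) → A i → ℝ) (D : (i : Fin d) → (∀ j, A j) → A i → E)
    (j : Fin d) (a : ∀ k, A k) : E :=
  (q j a (a j))⁻¹ • D j a (a j)

namespace IsAutoregressive

variable {q : (i : Fin d) → (∀ j, A j) → A i → ℝ} {E : Type*} [AddCommGroup E] [Module ℝ E]
  {D : (i : Fin d) → (∀ j, A j) → A i → E}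

theorem card_smul_sum_prod_mul_smul (hq : IsAutoregressive q) {k : Fin d} {S : Finset (Fin d)}
    (hS : ∀ l ∈ S, l < k) (F : (∀ j, A j) → E) :
    (Fintype.card (A k) : ℝ) • ∑ a, ((∏ l ∈ S, q l a (a l)) * q k a (a k)) • F a =
      ∑ a, (∏ l ∈ S, q l a (a l)) • ∑ b, q k a b • F (update a k b) := by
  have hprefix : ∀ a c, ∏ l ∈ S, q l (update a k c) (update a k c l) = ∏ l ∈ S, q l a (a l) :=
    fun a c => prod_congr rfl fun l hl => by
      rw [update_of_ne (hS l hl).ne, (hq.dependsOn l).apply_update_of_notMem (lt_asymm (hS l hl))]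
  have hqk : ∀ a c, q k (update a k c) = q k a :=
    (hq.dependsOn k).apply_update_of_notMem (lt_irrefl k)
  have hswap := Fintype.sum_sum_update_eq_card_nsmul k
    (fun a b => (∏ l ∈ S, q l a (a l)) • q k a b • F (update a k b))
    (fun a c b => by simp only [hprefix, hqk, update_idem])
  rw [← Nat.cast_smul_eq_nsmul ℝ] at hswap
  simp only [update_eq_self] at hswap
  simp only [← hswap, smul_sum, mul_smul]

/-- Sums run over the whole product space, so every coordinate of `T`, which `g` ignores, is counted
`card` times on the left. -/
theorem prod_card_smul_sum_chainProb_smul (hq : IsAutoregressive q) (T : Finset (Fin d))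
    (hT : IsUpperSet (T : Set (Fin d))) {g : (∀ j, A j) → E} (hg : DependsOn g (↑T)ᶜ) :
    (∏ k ∈ T, (Fintype.card (A k) : ℝ)) • ∑ a, chainProb q a • g a =
      ∑ a, (∏ k ∈ Tᶜ, q k a (a k)) • g a := by
  induction T using Finset.induction_on_min generalizing g with
  | empty => simp [chainProb]
  | insert k T hk ih =>
    have hkT : k ∉ T := fun h => lt_irrefl k (hk k h)
    have hT' : IsUpperSet (T : Set (Fin d)) := fun x y hxy hx => by
      rcases mem_insert.1 (hT hxy (mem_insert_of_mem hx)) with rfl | hy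
      · exact absurd (hk x hx) (not_lt.2 hxy)
      · exact hy
    have hlt : ∀ l ∈ (insert k T)ᶜ, l < k := fun l hl => by
      by_contra hkl
      exact mem_compl.1 hl (hT (not_lt.1 hkl) (mem_insert_self k T))
    have hcompl : Tᶜ = insert k (insert k T)ᶜ := by
      ext l
      by_cases hl : l = k <;> simp [hl, hkT]
    calc (∏ k ∈ insert k T, (Fintype.card (A k) : ℝ)) • ∑ a, chainProb q a • g a
        = (Fintype.card (A k) : ℝ) • ∑ a, (∏ l ∈ Tᶜ, q l a (a l)) • g a := by
          rw [prod_insert hkT, mul_smul, ih hT' (hg.mono (by simp))]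
      _ = (Fintype.card (A k) : ℝ) •
            ∑ a, ((∏ l ∈ (insert k T)ᶜ, q l a (a l)) * q k a (a k)) • g a := by
          simp only [hcompl, prod_insert (fun h => mem_compl.1 h (mem_insert_self k T)), mul_comm]
      _ = ∑ a, (∏ l ∈ (insert k T)ᶜ, q l a (a l)) • ∑ b, q k a b • g (update a k b) :=
          hq.card_smul_sum_prod_mul_smul hlt g
      _ = ∑ a, (∏ l ∈ (insert k T)ᶜ, q l a (a l)) • g a := by
          have hgk : ∀ a b, g (update a k b) = g a := hg.apply_update_of_notMem (by simp)
          simp only [hgk, ← sum_smul, hq.sum_eq_one, one_smul]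

theorem score_dependsOn (hq : IsAutoregressive q)
    (hD : ∀ i, DependsOn (D i) (Set.Iio i)) (j : Fin d) :
    DependsOn (score q D j) (Set.Iic j) := fun a a' h => by
  have hlt : ∀ l ∈ Set.Iio j, a l = a' l := fun l hl => h l (Set.mem_Iic.2 (le_of_lt hl))
  rw [score, score, h j (Set.mem_Iic.2 le_rfl), hq.dependsOn j hlt, hD j hlt]

theorem sum_chainProb [∀ i, Nonempty (A i)] (hq : IsAutoregressive q) : ∑ a, chainProb q a = 1 := by
  have h := hq.prod_card_smul_sum_chainProb_smul univ (by simpa using isUpperSet_univ)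
    ((dependsOn_const (1 : ℝ)).mono (Set.empty_subset _))
  have hcard : ∏ k, (Fintype.card (A k) : ℝ) ≠ 0 :=
    prod_ne_zero_iff.2 fun k _ => Nat.cast_ne_zero.2 Fintype.card_ne_zero
  simp only [smul_eq_mul, mul_one, compl_univ, prod_empty, sum_const, card_univ,
    Fintype.card_pi, nsmul_eq_mul, Nat.cast_prod] at h
  exact (mul_eq_left₀ hcard).1 h

theorem sum_chainProb_smul_eq_sum_cond [∀ i, Nonempty (A i)] (hq : IsAutoregressive q) (i : Fin d)
    (h : (∀ j, A j) → A i → E) (hh : ∀ b, DependsOn (h · b) (Set.Iio i)) :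
    ∑ a, chainProb q a • h a (a i) = ∑ a, chainProb q a • ∑ b, q i a b • h a b := by
  set G := fun a => ∑ b, q i a b • h a b
  have hG : DependsOn G (Set.Iio i) := fun a a' haa' => by
    simp only [G, hq.dependsOn i haa', fun b => hh b haa']
  have hupd : ∀ a b, h (update a i b) b = h a b := fun a b =>
    (hh b).apply_update_of_notMem (lt_irrefl i) a b
  -- Marginalise out the coordinates `> i`, then sum out coordinate `i` by hand.
  have hreduce : ∀ F : (∀ j, A j) → E, DependsOn F (Set.Iic i) →
      ((Fintype.card (A i) : ℝ) * ∏ k ∈ Ioi i, (Fintype.card (A k) : ℝ)) •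
          ∑ a, chainProb q a • F a =
        ∑ a, (∏ l ∈ Iio i, q l a (a l)) • ∑ b, q i a b • F (update a i b) := by
    intro F hF
    have hcompl : (Ioi i)ᶜ = insert i (Iio i) := by ext l; simp [le_iff_lt_or_eq, or_comm]
    rw [mul_smul, hq.prod_card_smul_sum_chainProb_smul (Ioi i) (by simpa using isUpperSet_Ioi i)
      (by rwa [coe_Ioi, Set.compl_Ioi]), hcompl]
    simp only [prod_insert notMem_Iio_self, mul_comm (q i _ _)]
    exact hq.card_smul_sum_prod_mul_smul (fun l hl => mem_Iio.1 hl) F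
  have hF := hreduce (fun a => h a (a i)) fun a a' haa' => by
    simp only [haa' i (Set.mem_Iic.2 le_rfl), hh _ fun l hl => haa' l (Set.mem_Iic.2 hl.le)]
  have hG' := hreduce G (hG.mono Set.Iio_subset_Iic_self)
  simp only [update_self, hupd] at hF
  simp only [hG.apply_update_of_notMem (lt_irrefl i), ← sum_smul, hq.sum_eq_one, one_smul] at hG'
  have hc : (Fintype.card (A i) : ℝ) * ∏ k ∈ Ioi i, (Fintype.card (A k) : ℝ) ≠ 0 :=
    mul_ne_zero (Nat.cast_ne_zero.2 Fintype.card_ne_zero)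
      (prod_ne_zero_iff.2 fun k _ => Nat.cast_ne_zero.2 Fintype.card_ne_zero)
  exact smul_right_injective E hc (hF.trans hG'.symm)

theorem sum_chainProb_smul_smul_score_eq_zero [∀ i, Nonempty (A i)] (hq : IsAutoregressive q)
    (hq0 : ∀ i a b, q i a b ≠ 0) (hD : ∀ i, DependsOn (D i) (Set.Iio i))
    (hD0 : ∀ i a, ∑ b, D i a b = 0) (j : Fin d) {c : (∀ k, A k) → ℝ}
    (hc : DependsOn c (Set.Iio j)) :
    ∑ a, chainProb q a • (c a • score q D j a) = 0 := by
  refine (hq.sum_chainProb_smul_eq_sum_cond j (fun a b => c a • (q j a b)⁻¹ • D j a b)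
    fun b a a' h => by simp only [hc h, hq.dependsOn j h, hD j h]).trans ?_
  refine sum_eq_zero fun a _ => ?_
  have hb : ∀ b, q j a b • c a • (q j a b)⁻¹ • D j a b = c a • D j a b := fun b => by
    rw [smul_comm, smul_inv_smul₀ (hq0 j a b)]
  simp only [hb, ← smul_sum, hD0, smul_zero]

theorem sum_chainProb_smul_log_smul_sum_score_Ioi [∀ i, Nonempty (A i)] (hq : IsAutoregressive q)
    (hq0 : ∀ i a b, q i a b ≠ 0) (hD : ∀ i, DependsOn (D i) (Set.Iio i))
    (hD0 : ∀ i a, ∑ b, D i a b = 0) (i : Fin d) :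
    ∑ a, chainProb q a • (log (q i a (a i)) • ∑ j ∈ Ioi i, score q D j a) = 0 := by
  simp only [smul_sum]
  rw [sum_comm]
  refine sum_eq_zero fun j hj => hq.sum_chainProb_smul_smul_score_eq_zero hq0 hD hD0 j
    fun a a' h => ?_
  have hi : ∀ l ≤ i, a l = a' l := fun l hl => h l (lt_of_le_of_lt hl (mem_Ioi.1 hj))
  rw [hi i le_rfl, hq.dependsOn i fun l hl => hi l (le_of_lt hl)]

theorem sum_chainProb_smul_log_smul_sum_score [∀ i, Nonempty (A i)] (hq : IsAutoregressive q)
    (hq0 : ∀ i a b, q i a b ≠ 0) (hD : ∀ i, DependsOn (D i) (Set.Iio i))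
    (hD0 : ∀ i a, ∑ b, D i a b = 0) (i : Fin d) :
    ∑ a, chainProb q a • (log (q i a (a i)) • ∑ j, score q D j a) =
      ∑ a, chainProb q a • (∑ b, log (q i a b) • D i a b -
        (∑ b, negMulLog (q i a b)) • ∑ j ∈ Iio i, score q D j a) := by
  have hsplit : ∀ a, ∑ j, score q D j a =
      (∑ j ∈ Iio i, score q D j a + score q D i a) + ∑ j ∈ Ioi i, score q D j a := fun a => by
    rw [sum_Iio_add_eq_sum_Iic, ← sum_filter_add_sum_filter_not univ (· ≤ i)]
    simp only [not_le, filter_ge_eq_Iic, filter_lt_eq_Ioi]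
  have hearlier : DependsOn (fun a => ∑ j ∈ Iio i, score q D j a) (Set.Iio i) :=
    fun a a' h => sum_congr rfl fun j hj =>
      hq.score_dependsOn hD j fun l hl => h l (lt_of_le_of_lt hl (mem_Iio.1 hj))
  have hb : ∀ a b, q i a b • log (q i a b) • (∑ j ∈ Iio i, score q D j a + (q i a b)⁻¹ • D i a b)
      = log (q i a b) • D i a b - negMulLog (q i a b) • ∑ j ∈ Iio i, score q D j a :=
    fun a b => by
      rw [negMulLog, smul_add, smul_add, smul_comm (q i a b) (log (q i a b)) ((q i a b)⁻¹ • _),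
        smul_inv_smul₀ (hq0 i a b), smul_smul, neg_mul, neg_smul, sub_neg_eq_add, add_comm]
  calc _ = ∑ a, chainProb q a • (log (q i a (a i)) •
          (∑ j ∈ Iio i, score q D j a + score q D i a)) +
        ∑ a, chainProb q a • (log (q i a (a i)) • ∑ j ∈ Ioi i, score q D j a) := by
        rw [← sum_add_distrib]
        exact sum_congr rfl fun a _ => by rw [hsplit, smul_add, smul_add]
    _ = _ := by
        rw [hq.sum_chainProb_smul_log_smul_sum_score_Ioi hq0 hD hD0 i, add_zero]
        refine (hq.sum_chainProb_smul_eq_sum_cond i (fun a b => log (q i a b) •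
          (∑ j ∈ Iio i, score q D j a + (q i a b)⁻¹ • D i a b))
          fun b a a' h => by simp only [hq.dependsOn i h, hD i h, hearlier h]).trans ?_
        simp only [hb, sum_sub_distrib, sum_smul]

theorem sum_chainProb_smul_estimator [∀ i, Nonempty (A i)] (hq : IsAutoregressive q)
    (hq0 : ∀ i a b, q i a b ≠ 0) (hD : ∀ i, DependsOn (D i) (Set.Iio i))
    (hD0 : ∀ i a, ∑ b, D i a b = 0) :
    ∑ a, chainProb q a • ((∑ i, -∑ b, log (q i a b) • D i a b) +
        ∑ i, (∑ b, negMulLog (q i a b)) • ∑ j ∈ univ.filter (· < i), score q D j a) =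
      -∑ a, log (chainProb q a) • (chainProb q a • ∑ j, score q D j a) := by
  have hlog : ∀ a, log (chainProb q a) = ∑ i, log (q i a (a i)) := fun a =>
    log_prod fun i _ => hq0 i a (a i)
  calc _ = ∑ a, chainProb q a • ∑ i, -(∑ b, log (q i a b) • D i a b -
          (∑ b, negMulLog (q i a b)) • ∑ j ∈ Iio i, score q D j a) :=
        sum_congr rfl fun a _ => by
          simp only [filter_gt_eq_Iio, ← sum_add_distrib]
          exact congrArg _ (sum_congr rfl fun i _ => by abel)
    _ = -∑ i, ∑ a, chainProb q a • (∑ b, log (q i a b) • D i a b -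
          (∑ b, negMulLog (q i a b)) • ∑ j ∈ Iio i, score q D j a) := by
        simp only [smul_sum, smul_neg, sum_neg_distrib]
        rw [sum_comm]
    _ = -∑ i, ∑ a, chainProb q a • (log (q i a (a i)) • ∑ j, score q D j a) := by
        simp only [hq.sum_chainProb_smul_log_smul_sum_score hq0 hD hD0]
    _ = _ := by
        rw [sum_comm]
        refine congrArg _ (sum_congr rfl fun a _ => ?_)
        rw [smul_comm, hlog, sum_smul, smul_sum]

end IsAutoregressive

theorem condEnt_eq_sum_negMulLog (q : (Fin m → ℝ) → (i : Fin d) → ((j : Fin d) → A j) → A i → ℝ)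
    (θ : Fin m → ℝ) (i : Fin d) (a : (j : Fin d) → A j) :
    condEnt q θ i a = ∑ b, negMulLog (q θ i a b) := by
  simp only [condEnt, negMulLog, neg_mul, sum_neg_distrib]

theorem fderiv_sum_condEnt {q : (Fin m → ℝ) → (i : Fin d) → ((j : Fin d) → A j) → A i → ℝ}
    {θ₀ : Fin m → ℝ} {a : (j : Fin d) → A j} (hq0 : ∀ i b, q θ₀ i a b ≠ 0)
    (hsum : ∀ θ i, ∑ b, q θ i a b = 1)
    (hdiff : ∀ i b, DifferentiableAt ℝ (fun θ => q θ i a b) θ₀) :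
    fderiv ℝ (fun θ => ∑ i, condEnt q θ i a) θ₀ =
      ∑ i, -∑ b, log (q θ₀ i a b) • fderiv ℝ (fun θ => q θ i a b) θ₀ := by
  simp only [condEnt_eq_sum_negMulLog]
  exact (HasFDerivAt.fun_sum fun i _ => hasFDerivAt_sum_negMulLog
    (hdiff i) (hq0 i) (hsum · i)).fderiv

theorem fderiv_neg_sum_chainProb_mul_log [∀ i, Nonempty (A i)]
    {q : (Fin m → ℝ) → (i : Fin d) → ((j : Fin d) → A j) → A i → ℝ} {θ₀ : Fin m → ℝ}
    (hq : ∀ θ, IsAutoregressive (q θ)) (hq0 : ∀ i a b, q θ₀ i a b ≠ 0)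
    (hdiff : ∀ i a b, DifferentiableAt ℝ (fun θ => q θ i a b) θ₀) :
    fderiv ℝ (fun θ => -∑ a, (∏ k, q θ k a (a k)) * log (∏ k, q θ k a (a k))) θ₀ =
      -∑ a, log (chainProb (q θ₀) a) • (chainProb (q θ₀) a •
        ∑ j, score (q θ₀) (fun i a b => fderiv ℝ (fun θ => q θ i a b) θ₀) j a) := by
  have hp0 : ∀ a, chainProb (q θ₀) a ≠ 0 := fun a => prod_ne_zero_iff.2 fun k _ => hq0 k a (a k)
  have hdp : ∀ a, DifferentiableAt ℝ (fun θ => chainProb (q θ) a) θ₀ := fun a =>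
    (HasFDerivAt.finsetProd (g := fun k θ => q θ k a (a k)) fun k _ =>
      (hdiff k a (a k)).hasFDerivAt).differentiableAt
  have hent : (fun θ => -∑ a, (∏ k, q θ k a (a k)) * log (∏ k, q θ k a (a k))) =
      fun θ => ∑ a, negMulLog (chainProb (q θ) a) :=
    funext fun θ => by simp only [negMulLog, chainProb, neg_mul, sum_neg_distrib]
  rw [hent, (hasFDerivAt_sum_negMulLog hdp hp0 fun θ => (hq θ).sum_chainProb).fderiv]
  refine congrArg _ (sum_congr rfl fun a _ => ?_)
  exact congrArg _ (fderiv_prod_eq_smul_sum_inv_smul (g := fun k θ => q θ k a (a k))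
    (fun k => hdiff k a (a k)) fun k => hq0 k a (a k))

/-- The quantity
`∇_θ H̃_θ(A) + ∑_i H_θ^{(i)}(A_{<i}) ∇_θ ∑_{j<i} log p_θ(A_j | A_{<j})`,
with `A ∼ p_θ` and `H̃_θ(a) = ∑_i H_θ^{(i)}(a_{<i})`, is an unbiased estimator of the
gradient of the entropy `H_θ = -∑_a p_θ(a) log p_θ(a)`, where
`p_θ(a) = ∏_k q θ k a (a k)`. -/
theorem unbiased_entropy_gradient_estimator [∀ i, Nonempty (A i)]
    (q : (Fin m → ℝ) → (i : Fin d) → ((j : Fin d) → A j) → A i → ℝ)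
    (hdep : ∀ θ i (a b : (j : Fin d) → A j), (∀ j, j < i → a j = b j) → q θ i a = q θ i b)
    (hpos : ∀ θ i a b, 0 < q θ i a b)
    (hsum : ∀ θ i a, ∑ b, q θ i a b = 1)
    (hdiff : ∀ i a b, Differentiable ℝ (fun θ => q θ i a b))
    (θ₀ : Fin m → ℝ) :
    ∑ a : (k : Fin d) → A k, (∏ k, q θ₀ k a (a k)) •
        (fderiv ℝ (fun θ => ∑ i : Fin d, condEnt q θ i a) θ₀ +
          ∑ i : Fin d, condEnt q θ₀ i a •
            fderiv ℝ (fun θ => ∑ j ∈ Finset.univ.filter (· < i),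
              Real.log (q θ j a (a j))) θ₀) =
      fderiv ℝ (fun θ => -∑ a : (k : Fin d) → A k,
        (∏ k, q θ k a (a k)) * Real.log (∏ k, q θ k a (a k))) θ₀ := by
  have hq : ∀ θ, IsAutoregressive (q θ) := fun θ => ⟨fun i _ _ => hdep θ i _ _, hsum θ⟩
  have hq0 : ∀ i a b, q θ₀ i a b ≠ 0 := fun i a b => (hpos θ₀ i a b).ne'
  have hdq : ∀ i a b, DifferentiableAt ℝ (fun θ => q θ i a b) θ₀ := fun i a b =>
    (hdiff i a b).differentiableAt
  set D := fun i a b => fderiv ℝ (fun θ => q θ i a b) θ₀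
  have hD : ∀ i, DependsOn (D i) (Set.Iio i) := fun i a a' h => funext fun b =>
    congrArg (fderiv ℝ · θ₀) (funext fun θ => congrFun (hdep θ i a a' h) b)
  have hD0 : ∀ i a, ∑ b, D i a b = 0 := fun i a =>
    sum_fderiv_eq_zero_of_sum_eq_const (hdq i a) (hsum · i a)
  have hlog : ∀ a i, fderiv ℝ (fun θ => ∑ j ∈ univ.filter (· < i), log (q θ j a (a j))) θ₀ =
      ∑ j ∈ univ.filter (· < i), score (q θ₀) D j a := fun a i =>
    (HasFDerivAt.fun_sum fun j _ => (hdq j a (a j)).hasFDerivAt.log (hq0 j a (a j))).fderiv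
  have hH : ∀ a, fderiv ℝ (fun θ => ∑ i, condEnt q θ i a) θ₀ =
      ∑ i, -∑ b, log (q θ₀ i a b) • D i a b := fun a =>
    fderiv_sum_condEnt (fun i => hq0 i a) (fun θ i => hsum θ i a) (fun i => hdq i a)
  rw [fderiv_neg_sum_chainProb_mul_log hq hq0 hdq]
  simp only [hH, hlog]
  simp only [condEnt_eq_sum_negMulLog]
  exact (hq θ₀).sum_chainProb_smul_estimator hq0 hD hD0
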